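/- arXiv:2406.06874 — 2 statements merged into one kernel-verified Lean document; each statement's English description precedes it below -/
import Mathlib

section
/- For the two-action AIHF objective ℓ(R) = d_1 log π_1(R) + d_2 log π_2(R) + p_{12} log σ((R_1−R_2)/β) + p_{21} log σ((R_2−R_1)/β), where π_i(R) is the two-action softmax with parameter β, any critical point R satisfies π_1(R) = (d_1 + p_{12})/(d_1 + d_2 + p_{12} + p_{21}). -/
open Real

/-- Any critical point of the two-action AIHF objective
`ℓ(R) = d₁ log π₁(R) + d₂ log π₂(R) + p₁₂ log σ((R₁−R₂)/β) + p₂₁ log σ((R₂−R₁)/β)`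
induces the softmax policy `π₁(R) = (d₁+p₁₂)/(d₁+d₂+p₁₂+p₂₁)`. -/
theorem aihf_two_action_critical_point (β : ℝ) (hβ : 0 < β)
    (d1 d2 p12 p21 : ℝ) (hd1 : 0 ≤ d1) (hd2 : 0 ≤ d2)
    (hp12 : 0 ≤ p12) (hp21 : 0 ≤ p21)
    (htot : 0 < d1 + d2 + p12 + p21)
    (pi1 : ℝ → ℝ → ℝ)
    (hpi1 : ∀ R1 R2, pi1 R1 R2 =
      Real.exp (R1 / β) / (Real.exp (R1 / β) + Real.exp (R2 / β)))
    (L : ℝ → ℝ → ℝ)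
    (hLdef : ∀ R1 R2, L R1 R2 =
      d1 * Real.log (pi1 R1 R2) + d2 * Real.log (1 - pi1 R1 R2) +
        p12 * Real.log (1 / (1 + Real.exp (-((R1 - R2) / β)))) +
        p21 * Real.log (1 / (1 + Real.exp (-((R2 - R1) / β)))))
    (R1 R2 : ℝ)
    (hcrit1 : HasDerivAt (fun x => L x R2) 0 R1)
    (hcrit2 : HasDerivAt (fun y => L R1 y) 0 R2) :
    pi1 R1 R2 = (d1 + p12) / (d1 + d2 + p12 + p21) := by
  set C := Real.exp (R2 / β) with hC
  have hCpos : 0 < C := Real.exp_pos _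
  -- rewrite L x R2 in a cleaner form
  have hσ1 : ∀ x : ℝ, (1 : ℝ) / (1 + Real.exp (-((x - R2) / β))) = pi1 x R2 := by
    intro x
    rw [hpi1]
    have hE : (0:ℝ) < Real.exp (x / β) := Real.exp_pos _
    rw [show -((x - R2) / β) = R2 / β - x / β by ring, Real.exp_sub]
    rw [← hC]
    field_simp
  have hσ2 : ∀ x : ℝ, (1 : ℝ) / (1 + Real.exp (-((R2 - x) / β))) = 1 - pi1 x R2 := by
    intro x
    rw [hpi1]
    have hE : (0:ℝ) < Real.exp (x / β) := Real.exp_pos _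
    rw [show -((R2 - x) / β) = x / β - R2 / β by ring, Real.exp_sub]
    rw [← hC]
    field_simp
    ring
  have hL1 : ∀ x : ℝ, L x R2 = (d1 + p12) * Real.log (pi1 x R2)
      + (d2 + p21) * Real.log (1 - pi1 x R2) := by
    intro x
    rw [hLdef, hσ1, hσ2]; ring
  set s := pi1 R1 R2 with hs
  have hE1 : (0:ℝ) < Real.exp (R1 / β) := Real.exp_pos _
  have hden : (0:ℝ) < Real.exp (R1 / β) + C := by linarith
  have hspos : 0 < s := by
    rw [hs, hpi1, ← hC]; positivity
  have hslt : s < 1 := by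
    rw [hs, hpi1, ← hC]
    rw [div_lt_one hden]; linarith
  -- derivative of x ↦ pi1 x R2 at R1
  have hpideriv : HasDerivAt (fun x => pi1 x R2) (s * (1 - s) / β) R1 := by
    have hu : HasDerivAt (fun x : ℝ => Real.exp (x / β)) (Real.exp (R1 / β) * (1 / β)) R1 := by
      have h1 : HasDerivAt (fun x : ℝ => x / β) (1 / β) R1 := by
        simpa using (hasDerivAt_id R1).div_const β
      exact (Real.hasDerivAt_exp (R1 / β)).comp R1 h1
    have hv : HasDerivAt (fun x : ℝ => Real.exp (x / β) + C) (Real.exp (R1 / β) * (1 / β)) R1 :=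
      hu.add_const C
    have hdiv := hu.div hv (ne_of_gt hden)
    have heq : (fun x => pi1 x R2) = fun x : ℝ => Real.exp (x / β) / (Real.exp (x / β) + C) := by
      funext x; rw [hpi1, ← hC]
    rw [heq]
    refine hdiv.congr_deriv ?_
    rw [hs, hpi1, ← hC]
    field_simp
  have hlog1 : HasDerivAt (fun x => Real.log (pi1 x R2)) ((s * (1 - s) / β) / s) R1 :=
    by have h := (Real.hasDerivAt_log (ne_of_gt hspos)).comp R1 hpideriv; exact h.congr_deriv (by ring)
  have hlog2 : HasDerivAt (fun x => Real.log (1 - pi1 x R2))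
      (-(s * (1 - s) / β) / (1 - s)) R1 := by
    have h1 : HasDerivAt (fun x => 1 - pi1 x R2) (-(s * (1 - s) / β)) R1 := by
      simpa using hpideriv.const_sub 1
    have h2 := (Real.hasDerivAt_log (ne_of_gt (by linarith : (0:ℝ) < 1 - s))).comp R1 h1
    exact h2.congr_deriv (by ring)
  have hLder : HasDerivAt (fun x => L x R2)
      ((d1 + p12) * ((s * (1 - s) / β) / s) + (d2 + p21) * (-(s * (1 - s) / β) / (1 - s))) R1 := by
    have := (hlog1.const_mul (d1 + p12)).add (hlog2.const_mul (d2 + p21))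
    refine HasDerivAt.congr_of_eventuallyEq this ?_
    filter_upwards with x
    rw [hL1]
    rfl
  have hzero : (d1 + p12) * ((s * (1 - s) / β) / s) + (d2 + p21) * (-(s * (1 - s) / β) / (1 - s)) = 0 :=
    hLder.unique hcrit1
  have hkey : (d1 + p12) * (1 - s) - (d2 + p21) * s = 0 := by
    have hsne : s ≠ 0 := ne_of_gt hspos
    have h1sne : (1 : ℝ) - s ≠ 0 := by linarith
    have hβne : (β : ℝ) ≠ 0 := ne_of_gt hβ
    field_simp at hzero
    have hfac : (β * s * (1 - s)) * ((d1 + p12) * (1 - s) - (d2 + p21) * s) = 0 := by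
      linear_combination (β * s * (1 - s)) * hzero
    have hne : β * s * (1 - s) ≠ 0 := by positivity
    exact (mul_eq_zero.mp hfac).resolve_left hne
  have : s * (d1 + d2 + p12 + p21) = d1 + p12 := by nlinarith
  rw [hs] at this ⊢
  field_simp
  linarith [this]
end

section
/- Let f : ℝ^d → ℝ be L-smooth (∇f is L-Lipschitz) and bounded above. Suppose iterates θ_{k+1} = θ_k + α g_k with ‖g_k‖ ≤ G and ⟨∇f(θ_k), g_k − ∇f(θ_k)⟩ ≥ −B_k for errors B_k ≥ 0. Then (1/K)Σ_{k=0}^{K−1}‖∇f(θ_k)‖² ≤ (f* − f(θ_0))/(αK) + (1/K)Σ_{k=0}^{K−1} B_k + (L G² α)/2, where f* is an upper bound on f. -/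
open Real Finset

open intervalIntegral in

lemma smooth_lower_aux {d : ℕ}
    (f : EuclideanSpace ℝ (Fin d) → ℝ)
    (f' : EuclideanSpace ℝ (Fin d) → EuclideanSpace ℝ (Fin d))
    (hgrad : ∀ x, HasGradientAt f (f' x) x)
    (L : ℝ) (hL : 0 ≤ L)
    (hLip : ∀ x y, ‖f' x - f' y‖ ≤ L * ‖x - y‖)
    (x v : EuclideanSpace ℝ (Fin d)) :
    f x + inner ℝ (f' x) v - L / 2 * ‖v‖ ^ 2 ≤ f (x + v) := by
  have hcontf' : Continuous f' := by
    have : LipschitzWith (Real.toNNReal L) f' := by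
      apply LipschitzWith.of_dist_le_mul
      intro a b
      simpa [dist_eq_norm, Real.coe_toNNReal L hL] using hLip a b
    exact this.continuous
  set φ : ℝ → ℝ := fun t => f (x + t • v) with hφdef
  have hline : ∀ t : ℝ, HasDerivAt (fun s : ℝ => x + s • v) v t := by
    intro t
    simpa using ((hasDerivAt_id t).smul_const v).const_add x
  have hderiv : ∀ t : ℝ, HasDerivAt φ (inner ℝ (f' (x + t • v)) v) t := by
    intro t
    have h1 := ((hgrad (x + t • v)).hasFDerivAt).comp_hasDerivAt t (hline t)
    exact h1
  have hcont : Continuous fun t : ℝ => (inner ℝ (f' (x + t • v)) v : ℝ) := by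
    exact (hcontf'.comp (continuous_const.add (continuous_id.smul continuous_const))).inner continuous_const
  have hint : φ 1 - φ 0 = ∫ t in (0:ℝ)..1, inner ℝ (f' (x + t • v)) v := by
    rw [intervalIntegral.integral_eq_sub_of_hasDerivAt (fun t _ => hderiv t)
      (hcont.intervalIntegrable 0 1)]
  have hlow : ∀ t ∈ Set.Icc (0:ℝ) 1,
      (inner ℝ (f' x) v : ℝ) - L * ‖v‖ ^ 2 * t ≤ inner ℝ (f' (x + t • v)) v := by
    intro t ht
    have h1 : (inner ℝ (f' (x + t • v)) v : ℝ) =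
        inner ℝ (f' x) v + inner ℝ (f' (x + t • v) - f' x) v := by
      rw [← inner_add_left]; congr 1; abel
    have h2 : ‖f' (x + t • v) - f' x‖ ≤ L * (t * ‖v‖) := by
      have := hLip (x + t • v) x
      simpa [norm_smul, abs_of_nonneg ht.1] using this
    have h3 : |(inner ℝ (f' (x + t • v) - f' x) v : ℝ)| ≤ L * (t * ‖v‖) * ‖v‖ :=
      le_trans (abs_real_inner_le_norm _ _) (mul_le_mul_of_nonneg_right h2 (norm_nonneg _))
    have h4 := abs_le.mp h3
    rw [h1]; nlinarith [h4.1]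
  have hintlow : (inner ℝ (f' x) v : ℝ) - L / 2 * ‖v‖ ^ 2 ≤
      ∫ t in (0:ℝ)..1, inner ℝ (f' (x + t • v)) v := by
    have hmono := intervalIntegral.integral_mono_on (by norm_num : (0:ℝ) ≤ 1)
      (((continuous_const.sub (continuous_const.mul continuous_id)).intervalIntegrable 0 1) :
        IntervalIntegrable (fun t : ℝ => (inner ℝ (f' x) v : ℝ) - L * ‖v‖ ^ 2 * t) MeasureTheory.volume 0 1)
      (hcont.intervalIntegrable 0 1) hlow
    have hcomp : (∫ t in (0:ℝ)..1, ((inner ℝ (f' x) v : ℝ) - L * ‖v‖ ^ 2 * t)) =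
        (inner ℝ (f' x) v : ℝ) - L / 2 * ‖v‖ ^ 2 := by
      have hi1 : IntervalIntegrable (fun _ : ℝ => (inner ℝ (f' x) v : ℝ))
          MeasureTheory.volume 0 1 := continuous_const.intervalIntegrable 0 1
      have hi2 : IntervalIntegrable (fun t : ℝ => L * ‖v‖ ^ 2 * t)
          MeasureTheory.volume 0 1 :=
        (continuous_const.mul continuous_id).intervalIntegrable 0 1
      rw [intervalIntegral.integral_sub hi1 hi2, intervalIntegral.integral_const_mul,
        integral_id]
      simp
      ring
    linarith [hmono, hcomp ▸ hmono]
  have : φ 1 = f (x + v) := by simp [hφdef]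
  have h0 : φ 0 = f x := by simp [hφdef]
  linarith [hint ▸ hintlow, this, h0]

/-- Averaged gradient-norm bound for inexact gradient ascent on an `L`-smooth
function bounded above:
`(1/K) Σ ‖∇f(θ_k)‖² ≤ (f* − f(θ₀))/(αK) + (1/K) Σ B_k + L G² α / 2`. -/
theorem smooth_ascent_gradient_bound {d : ℕ}
    (f : EuclideanSpace ℝ (Fin d) → ℝ)
    (f' : EuclideanSpace ℝ (Fin d) → EuclideanSpace ℝ (Fin d))
    (hgrad : ∀ x, HasGradientAt f (f' x) x)
    (L : ℝ) (hL : 0 ≤ L)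
    (hLip : ∀ x y, ‖f' x - f' y‖ ≤ L * ‖x - y‖)
    (fstar : ℝ) (hbound : ∀ x, f x ≤ fstar)
    (α : ℝ) (hα : 0 < α) (G : ℝ) (hG : 0 ≤ G)
    (θ : ℕ → EuclideanSpace ℝ (Fin d))
    (g : ℕ → EuclideanSpace ℝ (Fin d))
    (hupdate : ∀ k, θ (k + 1) = θ k + α • g k)
    (hgnorm : ∀ k, ‖g k‖ ≤ G)
    (B : ℕ → ℝ) (hB : ∀ k, 0 ≤ B k)
    (herr : ∀ k, (inner ℝ (f' (θ k)) (g k - f' (θ k)) : ℝ) ≥ -(B k))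
    (K : ℕ) (hK : 0 < K) :
    (1 / (K : ℝ)) * ∑ k ∈ Finset.range K, ‖f' (θ k)‖ ^ 2 ≤
      (fstar - f (θ 0)) / (α * K) +
        (1 / (K : ℝ)) * ∑ k ∈ Finset.range K, B k + L * G ^ 2 * α / 2 := by
  have hKpos : (0 : ℝ) < K := by exact_mod_cast hK
  -- per-step inequality
  have hstep : ∀ k, α * ‖f' (θ k)‖ ^ 2 ≤
      f (θ (k + 1)) - f (θ k) + α * B k + L * G ^ 2 * α ^ 2 / 2 := by
    intro k
    have hs := smooth_lower_aux f f' hgrad L hL hLip (θ k) (α • g k)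
    rw [← hupdate k] at hs
    have hinner : (inner ℝ (f' (θ k)) (α • g k) : ℝ) = α * inner ℝ (f' (θ k)) (g k) :=
      real_inner_smul_right _ _ _
    have hdecomp : (inner ℝ (f' (θ k)) (g k) : ℝ) =
        ‖f' (θ k)‖ ^ 2 + inner ℝ (f' (θ k)) (g k - f' (θ k)) := by
      rw [inner_sub_right, real_inner_self_eq_norm_sq]; ring
    have hnv : ‖α • g k‖ ^ 2 ≤ α ^ 2 * G ^ 2 := by
      rw [norm_smul]
      have h1 : |α| * ‖g k‖ ≤ α * G := by
        rw [abs_of_pos hα]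
        exact mul_le_mul_of_nonneg_left (hgnorm k) hα.le
      calc (|α| * ‖g k‖) ^ 2 ≤ (α * G) ^ 2 := by
            apply sq_le_sq' <;> nlinarith [abs_nonneg α, norm_nonneg (g k)]
        _ = α ^ 2 * G ^ 2 := by ring
    have herrk := herr k
    nlinarith [hs, hinner, hdecomp, hnv, hα.le]
  -- sum over k
  have hsum : α * ∑ k ∈ Finset.range K, ‖f' (θ k)‖ ^ 2 ≤
      (f (θ K) - f (θ 0)) + α * ∑ k ∈ Finset.range K, B k +
        K * (L * G ^ 2 * α ^ 2 / 2) := by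
    have h1 : ∑ k ∈ Finset.range K, (α * ‖f' (θ k)‖ ^ 2) ≤
        ∑ k ∈ Finset.range K, (f (θ (k + 1)) - f (θ k) + α * B k + L * G ^ 2 * α ^ 2 / 2) :=
      Finset.sum_le_sum fun k _ => hstep k
    have h2 : ∑ k ∈ Finset.range K, (f (θ (k + 1)) - f (θ k)) = f (θ K) - f (θ 0) :=
      Finset.sum_range_sub (fun k => f (θ k)) K
    simp only [Finset.sum_add_distrib, Finset.sum_const, Finset.card_range,
      nsmul_eq_mul, ← Finset.mul_sum] at h1 ⊢
    rw [h2] at h1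
    linarith
  have hfK := hbound (θ K)
  have key : α * ∑ k ∈ Finset.range K, ‖f' (θ k)‖ ^ 2 ≤
      (fstar - f (θ 0)) + α * ∑ k ∈ Finset.range K, B k +
        K * (L * G ^ 2 * α ^ 2 / 2) := by linarith
  have hαK : (0 : ℝ) < α * K := by positivity
  calc (1 / (K : ℝ)) * ∑ k ∈ Finset.range K, ‖f' (θ k)‖ ^ 2
      = (α * ∑ k ∈ Finset.range K, ‖f' (θ k)‖ ^ 2) / (α * K) := by
        field_simp
    _ ≤ ((fstar - f (θ 0)) + α * ∑ k ∈ Finset.range K, B k +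
        K * (L * G ^ 2 * α ^ 2 / 2)) / (α * K) := by
        exact div_le_div_of_nonneg_right key hαK.le
    _ = (fstar - f (θ 0)) / (α * K) + (1 / (K : ℝ)) * ∑ k ∈ Finset.range K, B k +
        L * G ^ 2 * α / 2 := by field_simp
end
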